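/- Let q ≥ 1 and y0, y1, y2 ∈ (0,∞) satisfy y0·y1·y2 + y0·y1 + y1·y2 + y2·y0 = q. Consider the random-cluster measure with cluster-weighting factor q on the triangle graph T with vertices {A,B,C} and edges BC, CA, AB carrying edge-weights y0, y1, y2 respectively, and on the star graph S with vertices {A,B,C,O} and edges OA, OB, OC carrying edge-weights q/y0, q/y1, q/y2 respectively. Then the random partition of {A,B,C} induced by the open clusters has the same distribution under the two measures; equivalently, the random vector (1_{A↔B}, 1_{B↔C}, 1_{C↔A}) is equidistributed under the two measures. -/

import Mathlib

open Finset

/-- Connectivity indicators `(1_{A↔B}, 1_{B↔C}, 1_{C↔A})` in the triangle `T`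
with vertices `{A,B,C}`, where `ω 0` is the state of edge `BC`, `ω 1` that of
`CA`, and `ω 2` that of `AB`. -/
def triConn (ω : Fin 3 → Bool) : Bool × Bool × Bool :=
  (ω 2 || (ω 1 && ω 0), ω 0 || (ω 2 && ω 1), ω 1 || (ω 0 && ω 2))

/-- Connectivity indicators `(1_{A↔B}, 1_{B↔C}, 1_{C↔A})` in the star `S` with
vertices `{A,B,C,O}`, where `η 0` is the state of edge `OA`, `η 1` that of
`OB`, and `η 2` that of `OC`. -/
def starConn (η : Fin 3 → Bool) : Bool × Bool × Bool :=
  (η 0 && η 1, η 1 && η 2, η 2 && η 0)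

/-- The number of open edges of a configuration. -/
def openCount (ω : Fin 3 → Bool) : ℕ := (univ.filter fun i => ω i = true).card

/-- Number of open clusters of the triangle on `{A,B,C}` (isolated vertices
count): `3` minus the number of open edges, except that three open edges give
a single cluster. -/
def kTri (ω : Fin 3 → Bool) : ℕ := max 1 (3 - openCount ω)

/-- Number of open clusters of the star on `{A,B,C,O}` (isolated vertices
count): `4` minus the number of open edges. -/
def kStar (η : Fin 3 → Bool) : ℕ := 4 - openCount η

/-- Random-cluster weight of a triangle configuration, with cluster-weighting
factor `q` and edge-weights `y 0, y 1, y 2` on `BC`, `CA`, `AB`. -/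
noncomputable def triWeight (q : ℝ) (y : Fin 3 → ℝ) (ω : Fin 3 → Bool) : ℝ :=
  q ^ kTri ω * ∏ i, (if ω i then y i else 1)

/-- Random-cluster weight of a star configuration, with cluster-weighting
factor `q` and edge-weights `q / y 0, q / y 1, q / y 2` on `OA`, `OB`, `OC`. -/
noncomputable def starWeight (q : ℝ) (y : Fin 3 → ℝ) (η : Fin 3 → Bool) : ℝ :=
  q ^ kStar η * ∏ i, (if η i then q / y i else 1)

/-!
Compare the two measures class by class of the induced partition of `{A, B, C}`. On the triangle
the partitions "all apart", "only the pair joined by edge `k`" and "all together" have weights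
`q³`, `q² y k` and `q (y0 y1 + y1 y2 + y2 y0 + y0 y1 y2)`; on the star they have weights
`q³ (q + Σ q / y i)`, `q⁴ / (y i y j)` (the two other edges open) and `q⁴ / (y0 y1 y2)`.
When `ψ(y) = 0` every star weight is `q² / (y0 y1 y2)` times the triangle weight, so the
normalised distributions coincide.
-/

section FiberMass

variable {Ω Ω' P R : Type*} [Fintype Ω] [Fintype Ω'] [DecidableEq P]

def fiberMass [AddCommMonoid R] (c : Ω → P) (w : Ω → R) (p : P) : R :=
  ∑ x, if c x = p then w x else 0

theorem sum_fiberMass [Fintype P] [AddCommMonoid R] (c : Ω → P) (w : Ω → R) :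
    ∑ p, fiberMass c w p = ∑ x, w x := by
  unfold fiberMass
  rw [Finset.sum_comm]
  simp only [Finset.sum_ite_eq, Finset.mem_univ, if_true]

theorem fiberMass_div_sum_eq_of_proportional [Fintype P] [Field R] {c : Ω → P} {c' : Ω' → P}
    {w : Ω → R} {w' : Ω' → R} {r : R} (hr : r ≠ 0)
    (h : ∀ p, fiberMass c' w' p = r * fiberMass c w p) (p : P) :
    fiberMass c w p / ∑ x, w x = fiberMass c' w' p / ∑ x, w' x := by
  rw [← sum_fiberMass c w, ← sum_fiberMass c' w', h, Finset.sum_congr rfl fun p _ => h p,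
    ← Finset.mul_sum, mul_div_mul_left _ _ hr]

end FiberMass

theorem Fintype.sum_fun_fin_three {α M : Type*} [Fintype α] [AddCommMonoid M]
    (f : (Fin 3 → α) → M) :
    ∑ ω, f ω = ∑ a, ∑ b, ∑ c, f ![a, b, c] := by
  simp only [← Fintype.sum_prod_type']
  refine (Fintype.sum_equiv ((Fin.consEquiv _).symm.trans ((Equiv.refl _).prodCongr
    ((Fin.consEquiv _).symm.trans ((Equiv.refl _).prodCongr (Equiv.funUnique _ _))))) _ _
    fun ω => ?_)
  simp only [Equiv.trans_apply, Equiv.prodCongr_apply, Prod.map]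
  congr
  funext i
  fin_cases i <;> rfl

theorem openCount_vecCons (a b c : Bool) : openCount ![a, b, c] = a.toNat + b.toNat + c.toNat := by
  cases a <;> cases b <;> cases c <;> decide

theorem fiberMass_starWeight (q : ℝ) (y : Fin 3 → ℝ) (hy : ∀ i, y i ≠ 0)
    (hψ : y 0 * y 1 * y 2 + y 0 * y 1 + y 1 * y 2 + y 2 * y 0 = q) (abc : Bool × Bool × Bool) :
    fiberMass starConn (starWeight q y) abc =
      q ^ 2 / (y 0 * y 1 * y 2) * fiberMass triConn (triWeight q y) abc := by
  have := hy 0; have := hy 1; have := hy 2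
  subst hψ
  simp only [fiberMass, Fintype.sum_fun_fin_three, Fintype.sum_bool, starWeight, triWeight,
    kStar, kTri, openCount_vecCons, starConn, triConn, Fin.prod_univ_three, Matrix.cons_val,
    Bool.toNat_true, Bool.toNat_false, Nat.reduceAdd, Nat.reduceSub, Nat.one_le_ofNat,
    sup_of_le_right, max_self, Nat.max_zero, Bool.and_true, Bool.and_false, Bool.or_true,
    Bool.or_false, if_true, if_false, Bool.false_eq_true, mul_one]
  rcases abc with ⟨_ | _, _ | _, _ | _⟩ <;>
    simp only [Prod.mk.injEq, Bool.true_eq_false, Bool.false_eq_true, and_self, and_true,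
      and_false, if_true, if_false, add_zero, zero_add, mul_zero] <;>
    field_simp <;> ring

theorem star_triangle_random_cluster_general (q : ℝ)
    (y : Fin 3 → ℝ) (hy : ∀ i, 0 < y i)
    (hψ : y 0 * y 1 * y 2 + y 0 * y 1 + y 1 * y 2 + y 2 * y 0 = q)
    (abc : Bool × Bool × Bool) :
    (∑ ω : Fin 3 → Bool, if triConn ω = abc then triWeight q y ω else 0) /
        (∑ ω : Fin 3 → Bool, triWeight q y ω) =
      (∑ η : Fin 3 → Bool, if starConn η = abc then starWeight q y η else 0) /
        (∑ η : Fin 3 → Bool, starWeight q y η) := by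
  have := hy 0; have := hy 1; have := hy 2
  have hq : 0 < q := hψ ▸ by positivity
  exact fiberMass_div_sum_eq_of_proportional (by positivity)
    (fiberMass_starWeight q y (fun i => (hy i).ne') hψ) abc

/-- **Star–triangle transformation for the random-cluster model.** Let `q ≥ 1`
and let `y 0, y 1, y 2 > 0` satisfy the Yang–Baxter condition
`y0 y1 y2 + y0 y1 + y1 y2 + y2 y0 = q`. Then the vector of connectivity
indicators among `A, B, C` is equidistributed under the random-cluster measure
on the triangle with edge-weights `y i` and under that on the star with
edge-weights `q / y i`. -/
theorem star_triangle_random_cluster (q : ℝ) (hq : 1 ≤ q)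
    (y : Fin 3 → ℝ) (hy : ∀ i, 0 < y i)
    (hψ : y 0 * y 1 * y 2 + y 0 * y 1 + y 1 * y 2 + y 2 * y 0 = q)
    (abc : Bool × Bool × Bool) :
    (∑ ω : Fin 3 → Bool, if triConn ω = abc then triWeight q y ω else 0) /
        (∑ ω : Fin 3 → Bool, triWeight q y ω) =
      (∑ η : Fin 3 → Bool, if starConn η = abc then starWeight q y η else 0) /
        (∑ η : Fin 3 → Bool, starWeight q y η) :=
  star_triangle_random_cluster_general q y hy hψ abc
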